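/- arXiv:2006.01063 — 4 statements merged into one kernel-verified Lean document; each statement's English description precedes it below -/
import Mathlib

section
/- Let Λ be a full-rank lattice in ℝ^r with fundamental parallelepiped 𝒫 of volume V, and let d be the squared diameter of 𝒫 (the largest squared distance between two of its vertices). If T > 4d, then |(2^r V / Ω_r) · #(Λ ∩ B(½T^{1/2})) − T^{r/2}| ≤ 3^r T^{(r−1)/2} d^{1/2}, where Ω_r = π^{r/2}/Γ(r/2+1) is the volume of the unit ball in ℝ^r and B(R) is the closed ball of radius R centered at the origin. -/
/-!
Tile space by the translates `x + F` of the half-open fundamental domain `F` by lattice points `x`.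
Every point of `F` lies within `√d` of the origin, so the tiles attached to the lattice points of
`B(R)` cover `B(R - √d)` and are covered by `B(R + √d)`. Comparing volumes, `N · V` lies between
`Ω_r (R - √d)^r` and `Ω_r (R + √d)^r`; with `R = √T / 2` this places the normalised count between
`(√T - 2√d)^r` and `(√T + 2√d)^r`, and the bound `|a^r - c^r| ≤ r |a - c| max(a, c)^(r-1)`
together with `r 2^r ≤ 3^r` finishes the proof.
-/

open MeasureTheory Measure Metric Module Set Submodule Pointwise

theorem mul_two_pow_le_three_pow : ∀ n : ℕ, n * 2 ^ n ≤ 3 ^ n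
  | 0 => by norm_num
  | 1 => by norm_num
  | 2 => by norm_num
  | n + 3 => by
    have ih := mul_two_pow_le_three_pow (n + 2)
    have h : 2 ^ n ≤ 3 ^ n := Nat.pow_le_pow_left (by norm_num) n
    calc (n + 3) * 2 ^ (n + 3) = 2 * ((n + 2) * 2 ^ (n + 2)) + 8 * 2 ^ n := by ring
      _ ≤ 2 * 3 ^ (n + 2) + 9 * 3 ^ n := by gcongr; norm_num
      _ = 3 ^ (n + 3) := by ring

theorem abs_sub_pow_le_of_mem_Icc {u h X : ℝ} {n : ℕ} (hh : 0 ≤ h) (hhu : h ≤ u)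
    (hX : X ∈ Icc ((u - h) ^ n) ((u + h) ^ n)) : |X - u ^ n| ≤ n * h * (u + h) ^ (n - 1) := by
  have hup := abs_pow_sub_pow_le (u + h) u n
  have hlow := abs_pow_sub_pow_le u (u - h) n
  rw [abs_of_nonneg (by linarith : 0 ≤ u + h), abs_of_nonneg (by linarith : 0 ≤ u),
    max_eq_left (by linarith), abs_of_nonneg (by linarith : 0 ≤ u + h - u)] at hup
  rw [abs_of_nonneg (by linarith : 0 ≤ u), abs_of_nonneg (by linarith : 0 ≤ u - h),
    max_eq_left (by linarith), abs_of_nonneg (by linarith : 0 ≤ u - (u - h))] at hlow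
  have : u ^ (n - 1) ≤ (u + h) ^ (n - 1) := by gcongr <;> linarith
  rw [abs_sub_le_iff]
  constructor
  · nlinarith [le_abs_self ((u + h) ^ n - u ^ n), hX.2]
  · nlinarith [le_abs_self (u ^ n - (u - h) ^ n), hX.1, (by positivity : (0 : ℝ) ≤ n * h)]

theorem abs_sub_pow_le_three_pow_mul {u D X : ℝ} {n : ℕ} (hD : 0 ≤ D) (hDu : 2 * D ≤ u)
    (hX : X ∈ Icc ((u - 2 * D) ^ n) ((u + 2 * D) ^ n)) : |X - u ^ n| ≤ 3 ^ n * u ^ (n - 1) * D :=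
  calc |X - u ^ n| ≤ n * (2 * D) * (u + 2 * D) ^ (n - 1) :=
        abs_sub_pow_le_of_mem_Icc (by positivity) hDu hX
    _ ≤ n * (2 * D) * (2 * u) ^ (n - 1) := by gcongr <;> linarith
    _ = ((n * 2 ^ n : ℕ) : ℝ) * u ^ (n - 1) * D := by
        cases n with
        | zero => simp
        | succ m => push_cast; ring
    _ ≤ 3 ^ n * u ^ (n - 1) * D := by
        gcongr
        · exact pow_nonneg (by linarith) _
        exact_mod_cast mul_two_pow_le_three_pow n

theorem parallelepiped_subset_closedBall {ι E : Type*} [Fintype ι] [NormedAddCommGroup E]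
    [NormedSpace ℝ E] {v : ι → E} {D : ℝ} (hv : ∀ s : Finset ι, ‖∑ i ∈ s, v i‖ ≤ D) :
    parallelepiped v ⊆ closedBall 0 D := by
  classical
  rw [parallelepiped_eq_convexHull]
  refine convexHull_min (fun x hx ↦ ?_) (convex_closedBall 0 D)
  obtain ⟨g, hg, rfl⟩ := (Set.mem_fintype_sum _ _).1 hx
  have : ∑ i, g i = ∑ i ∈ Finset.univ.filter (g · ≠ 0), v i := by
    rw [Finset.sum_filter]
    refine Finset.sum_congr rfl fun i _ ↦ ?_
    rcases hg i with h | h <;> simp_all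
  exact mem_closedBall_zero_iff.2 (this ▸ hv _)

theorem EuclideanSpace.volume_real_closedBall_zero_one (ι : Type*) [Nonempty ι] [Fintype ι] :
    volume.real (closedBall (0 : EuclideanSpace ℝ ι) 1) =
      Real.pi ^ ((Fintype.card ι : ℝ) / 2) / Real.Gamma ((Fintype.card ι : ℝ) / 2 + 1) := by
  rw [measureReal_def, EuclideanSpace.volume_closedBall, ENNReal.ofReal_one, one_pow, one_mul,
    ENNReal.toReal_ofReal (by positivity), Real.rpow_div_two_eq_sqrt _ Real.pi_pos.le,
    Real.rpow_natCast]

namespace ZSpan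

variable {E ι : Type*} [NormedAddCommGroup E] [NormedSpace ℝ E] (b : Module.Basis ι ℝ E)

theorem pairwiseDisjoint_vadd_fundamentalDomain [Fintype ι] :
    (span ℤ (range b) : Set E).PairwiseDisjoint (· +ᵥ fundamentalDomain b) := by
  intro x hx y hy hxy
  refine Set.disjoint_left.2 fun z hzx hzy ↦ hxy ?_
  rw [Set.mem_vadd_set_iff_neg_vadd_mem] at hzx hzy
  have hx' := (vadd_mem_fundamentalDomain b ⟨-x, neg_mem hx⟩ z).1 hzx
  have hy' := (vadd_mem_fundamentalDomain b ⟨-y, neg_mem hy⟩ z).1 hzy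
  simpa using congrArg Subtype.val (hx'.trans hy'.symm)

theorem measure_biUnion_vadd_fundamentalDomain [Fintype ι] [MeasurableSpace E] [BorelSpace E]
    (μ : Measure E) [μ.IsAddLeftInvariant] {S : Set E} (hS : S.Finite)
    (hSL : S ⊆ span ℤ (range b)) :
    μ (⋃ x ∈ S, x +ᵥ fundamentalDomain b) = S.ncard * μ (fundamentalDomain b) := by
  obtain ⟨s, rfl⟩ := hS.exists_finset_coe
  rw [Finset.set_biUnion_coe, measure_biUnion_finset
    ((pairwiseDisjoint_vadd_fundamentalDomain b).subset hSL)
    fun x _ ↦ (fundamentalDomain_measurableSet b).const_vadd x]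
  simp [measure_vadd, Finset.sum_const, nsmul_eq_mul]

variable {b}

theorem closedBall_sub_subset_biUnion_vadd_fundamentalDomain [Fintype ι] {D : ℝ}
    (hF : fundamentalDomain b ⊆ closedBall 0 D) (R : ℝ) :
    closedBall (0 : E) (R - D) ⊆
      ⋃ x ∈ (span ℤ (range b) : Set E) ∩ closedBall 0 R, x +ᵥ fundamentalDomain b := by
  intro y hy
  have hfract : ‖fract b y‖ ≤ D :=
    mem_closedBall_zero_iff.1 (hF (fract_mem_fundamentalDomain b y))
  refine mem_biUnion (x := (floor b y : E)) ⟨(floor b y).2, ?_⟩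
    ⟨fract b y, fract_mem_fundamentalDomain b y, by simp [fract_apply]⟩
  rw [mem_closedBall_zero_iff] at hy ⊢
  calc ‖(floor b y : E)‖ = ‖y - fract b y‖ := by simp [fract_apply]
    _ ≤ ‖y‖ + ‖fract b y‖ := norm_sub_le _ _
    _ ≤ R := by linarith

theorem biUnion_vadd_fundamentalDomain_subset_closedBall_add {D : ℝ}
    (hF : fundamentalDomain b ⊆ closedBall 0 D) (R : ℝ) :
    ⋃ x ∈ (span ℤ (range b) : Set E) ∩ closedBall 0 R, x +ᵥ fundamentalDomain b ⊆
      closedBall 0 (R + D) := by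
  simp only [iUnion_subset_iff]
  rintro x ⟨-, hx⟩ _ ⟨f, hf, rfl⟩
  rw [mem_closedBall_zero_iff] at hx ⊢
  exact (norm_add_le _ _).trans (add_le_add hx (mem_closedBall_zero_iff.1 (hF hf)))

theorem ncard_inter_closedBall_mul_measureReal_mem_Icc [Fintype ι] [MeasurableSpace E]
    [BorelSpace E] (μ : Measure E) [μ.IsAddHaarMeasure] {D R : ℝ}
    (hF : fundamentalDomain b ⊆ closedBall 0 D) (hDR : D ≤ R) :
    (((span ℤ (range b) : Set E) ∩ closedBall 0 R).ncard : ℝ) * μ.real (fundamentalDomain b) ∈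
      Icc ((R - D) ^ finrank ℝ E * μ.real (closedBall 0 1))
        ((R + D) ^ finrank ℝ E * μ.real (closedBall 0 1)) := by
  have := b.finiteDimensional_of_finite
  have hD : 0 ≤ D := by
    simpa using hF (show (0 : E) ∈ fundamentalDomain b by simp [mem_fundamentalDomain])
  set S := (span ℤ (range b) : Set E) ∩ closedBall 0 R
  have hS : S.Finite := by
    simpa only [S, inter_comm] using setFinite_inter b (isBounded_closedBall (x := 0) (r := R))
  have hU : μ.real (⋃ x ∈ S, x +ᵥ fundamentalDomain b) =
      S.ncard * μ.real (fundamentalDomain b) := by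
    rw [measureReal_def, measure_biUnion_vadd_fundamentalDomain b μ hS inter_subset_left,
      ENNReal.toReal_mul, ENNReal.toReal_natCast, measureReal_def]
  have hUsub := biUnion_vadd_fundamentalDomain_subset_closedBall_add hF R
  rw [← hU, ← addHaar_real_closedBall' μ 0 (by linarith),
    ← addHaar_real_closedBall' μ 0 (by linarith)]
  exact ⟨measureReal_mono (closedBall_sub_subset_biUnion_vadd_fundamentalDomain hF R)
      (measure_mono hUsub |>.trans_lt measure_closedBall_lt_top).ne,
    measureReal_mono hUsub measure_closedBall_lt_top.ne⟩

end ZSpan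

theorem stmt_0_general (r : ℕ) (hr : 1 ≤ r)
    (b : Module.Basis (Fin r) ℝ (EuclideanSpace ℝ (Fin r)))
    (V d T : ℝ)
    (hV : V = (volume (parallelepiped ⇑b)).toReal)
    (hd_ub : ∀ δ : Fin r → ℤ, (∀ i, δ i = -1 ∨ δ i = 0 ∨ δ i = 1) →
      ‖∑ i, (δ i : ℝ) • b i‖ ^ 2 ≤ d)
    (hT : 4 * d < T) :
    |(2 ^ r * V / (Real.pi ^ ((r : ℝ) / 2) / Real.Gamma ((r : ℝ) / 2 + 1))) *
        (((Submodule.span ℤ (Set.range ⇑b) : Submodule ℤ (EuclideanSpace ℝ (Fin r))) :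
            Set (EuclideanSpace ℝ (Fin r))) ∩
          Metric.closedBall 0 (Real.sqrt T / 2)).ncard -
        T ^ ((r : ℝ) / 2)| ≤
      3 ^ r * T ^ (((r : ℝ) - 1) / 2) * Real.sqrt d := by
  have : Nonempty (Fin r) := ⟨⟨0, hr⟩⟩
  have hd : 0 ≤ d := by simpa using hd_ub 0 (fun _ ↦ by simp)
  have hT0 : 0 ≤ T := by linarith
  have h2D : 2 * √d ≤ √T :=
    Real.le_sqrt_of_sq_le (by rw [mul_pow, Real.sq_sqrt hd]; linarith)
  have hF : ZSpan.fundamentalDomain b ⊆ closedBall 0 √d :=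
    (ZSpan.fundamentalDomain_subset_parallelepiped b).trans <|
      parallelepiped_subset_closedBall fun s ↦ Real.le_sqrt_of_sq_le <| by
        simpa [Finset.sum_ite_mem] using
          hd_ub (fun i ↦ if i ∈ s then 1 else 0) (fun i ↦ by split_ifs <;> simp)
  have hVF : volume.real (ZSpan.fundamentalDomain b) = V :=
    hV ▸ measureReal_congr (ZSpan.fundamentalDomain_ae_parallelepiped b volume)
  obtain ⟨hlow, hup⟩ :=
    ZSpan.ncard_inter_closedBall_mul_measureReal_mem_Icc volume hF (R := √T / 2) (by linarith)
  rw [finrank_euclideanSpace_fin, hVF, EuclideanSpace.volume_real_closedBall_zero_one,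
    Fintype.card_fin] at hlow hup
  have hΩ : 0 < Real.pi ^ ((r : ℝ) / 2) / Real.Gamma ((r : ℝ) / 2 + 1) := by positivity
  have hT_sub_one : T ^ (((r : ℝ) - 1) / 2) = √T ^ (r - 1) := by
    rw [Real.rpow_div_two_eq_sqrt _ hT0, ← Nat.cast_pred hr, Real.rpow_natCast]
  rw [hT_sub_one, Real.rpow_div_two_eq_sqrt _ hT0, Real.rpow_natCast]
  refine abs_sub_pow_le_three_pow_mul (Real.sqrt_nonneg d) h2D ⟨?_, ?_⟩
  · rw [div_mul_eq_mul_div, le_div_iff₀ hΩ, show √T - 2 * √d = 2 * (√T / 2 - √d) by ring,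
      mul_pow]
    linear_combination (2 : ℝ) ^ r * hlow
  · rw [div_mul_eq_mul_div, div_le_iff₀ hΩ, show √T + 2 * √d = 2 * (√T / 2 + √d) by ring,
      mul_pow]
    linear_combination (2 : ℝ) ^ r * hup

/-- Let `Λ ⊂ ℝ^r` be a full-rank lattice with fundamental parallelepiped `𝒫`
of volume `V`, and let `d` be the largest squared distance between two of the
vertices of `𝒫`.  If `T > 4d`, then
`|(2^r V / Ω_r) · #(Λ ∩ B(½√T)) − T^{r/2}| ≤ 3^r T^{(r−1)/2} √d`,
where `Ω_r = π^{r/2}/Γ(r/2+1)` is the volume of the unit ball of `ℝ^r` and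
`B(R)` is the closed ball of radius `R` about the origin. -/
theorem stmt_0 (r : ℕ) (hr : 1 ≤ r)
    (b : Module.Basis (Fin r) ℝ (EuclideanSpace ℝ (Fin r)))
    (V d T : ℝ)
    (hV : V = (volume (parallelepiped ⇑b)).toReal)
    (hd_ub : ∀ δ : Fin r → ℤ, (∀ i, δ i = -1 ∨ δ i = 0 ∨ δ i = 1) →
      ‖∑ i, (δ i : ℝ) • b i‖ ^ 2 ≤ d)
    (hd_mem : ∃ δ : Fin r → ℤ, (∀ i, δ i = -1 ∨ δ i = 0 ∨ δ i = 1) ∧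
      ‖∑ i, (δ i : ℝ) • b i‖ ^ 2 = d)
    (hT : 4 * d < T) :
    |(2 ^ r * V / (Real.pi ^ ((r : ℝ) / 2) / Real.Gamma ((r : ℝ) / 2 + 1))) *
        (((Submodule.span ℤ (Set.range ⇑b) : Submodule ℤ (EuclideanSpace ℝ (Fin r))) :
            Set (EuclideanSpace ℝ (Fin r))) ∩
          Metric.closedBall 0 (Real.sqrt T / 2)).ncard -
        T ^ ((r : ℝ) / 2)| ≤
      3 ^ r * T ^ (((r : ℝ) - 1) / 2) * Real.sqrt d :=
  stmt_0_general r hr b V d T hV hd_ub hT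
end

section
/- Let a, m be integers with 3 ∤ am. The number of solutions n mod 3 to a n^6 ≡ m^3 (mod 3) equals 2 if a^{-1}m is a quadratic residue mod 3 (i.e., am ≡ 1 mod 3) and 0 otherwise; for α ≥ 2, the number of solutions n mod 3^α equals 6 if am ≡ 1 (mod 3) and a^{-1} is a cubic residue modulo 9, and 0 otherwise. -/
/-!
The unit group of `ZMod (3 ^ α)` is cyclic of order `2 · 3 ^ (α - 1)`, so for `α ≥ 2` the map
`x ↦ x ^ 6` has a kernel of order `6` and its image has index `6`. Reduction to `(ZMod 9)ˣ`, a
group of order `6`, kills every sixth power and is onto, so its kernel has the same order as the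
group of sixth powers and the two coincide: a unit is a sixth power iff it is `1` modulo `9`.
Hence `a n ^ 6 = m ^ 3` has exactly `6` solutions when `a ≡ m ^ 3 (mod 9)` and none otherwise,
and a finite check in `ZMod 9` rewrites `a ≡ m ^ 3` as the stated residue conditions. Modulo `3`
everything is a finite check.
-/

/-- `ρ_m^{(a)}(M)` : the number of residue classes `n` modulo `M`
with `a n^6 ≡ m^3 (mod M)`. -/
noncomputable def rhoCount (a m : ℤ) (M : ℕ) : ℕ :=
  Nat.card {n : ZMod M // (a : ZMod M) * n ^ 6 = (m : ZMod M) ^ 3}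

open Function

section CyclicGroup

variable {G : Type*} [CommGroup G] [IsCyclic G] [Finite G]

open Classical in
theorem IsCyclic.card_pow_eq_of_dvd_card {d : ℕ} (hd : d ∣ Nat.card G) (y : G) :
    Nat.card {x : G // x ^ d = y} = if y ∈ (powMonoidHom d : G →* G).range then d else 0 := by
  split_ifs with hy
  · obtain ⟨x₀, rfl⟩ := hy
    refine (Nat.card_congr ((powMonoidHom d).fiberEquivKer x₀)).trans ?_
    rw [IsCyclic.card_powMonoidHom_ker, Nat.gcd_eq_right hd]
  · have : IsEmpty {x : G // x ^ d = y} := ⟨fun ⟨x, hx⟩ => hy ⟨x, hx⟩⟩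
    exact Nat.card_of_isEmpty

theorem IsCyclic.range_powMonoidHom_eq_ker {H : Type*} [Group H] [Finite H] (f : G →* H)
    (hf : Surjective f) (hH : Nat.card H ∣ Nat.card G) :
    (powMonoidHom (Nat.card H) : G →* G).range = f.ker := by
  refine Subgroup.eq_of_le_of_card_ge ?_ ?_
  · rintro _ ⟨x, hx⟩
    rw [← hx, MonoidHom.mem_ker, powMonoidHom_apply, map_pow, pow_card_eq_one']
  · have hker : Nat.card f.ker * Nat.card H = Nat.card G := by
      rw [← Subgroup.card_mul_index f.ker, Subgroup.index_ker, f.range_eq_top_of_surjective hf,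
        Subgroup.card_top]
    rw [IsCyclic.card_powMonoidHom_range, Nat.gcd_eq_right hH, ← hker,
      Nat.mul_div_cancel _ Nat.card_pos]

end CyclicGroup

theorem Units.card_mul_pow_eq_card_pow_eq {R : Type*} [CommMonoid R] (A C : Rˣ) {d : ℕ}
    (hd : d ≠ 0) :
    Nat.card {n : R // (A : R) * n ^ d = C} = Nat.card {u : Rˣ // u ^ d = A⁻¹ * C} := by
  symm
  refine Nat.card_eq_of_bijective (fun u => ⟨u.1, ?_⟩) ⟨?_, ?_⟩
  · rw [← Units.val_pow_eq_pow_val, u.2, ← Units.val_mul, _root_.mul_inv_cancel_left]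
  · intro u v huv
    exact Subtype.ext (Units.ext (congrArg Subtype.val huv))
  · rintro ⟨n, hn⟩
    have hu : IsUnit n :=
      (isUnit_pow_iff hd).mp (isUnit_of_mul_isUnit_right (hn ▸ C.isUnit))
    refine ⟨⟨hu.unit, Units.ext ?_⟩, rfl⟩
    rw [Units.val_pow_eq_pow_val, IsUnit.unit_spec, Units.val_mul, ← hn,
      Units.inv_mul_cancel_left]

theorem ZMod.six_dvd_card_units_three_pow {α : ℕ} (hα : 2 ≤ α) :
    6 ∣ Nat.card (ZMod (3 ^ α))ˣ := by
  rw [Nat.card_eq_fintype_card, ZMod.card_units_eq_totient,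
    Nat.totient_prime_pow Nat.prime_three (by omega)]
  exact mul_dvd_mul (dvd_pow_self 3 (by omega : α - 1 ≠ 0)) (dvd_refl 2)

theorem Int.isCoprime_prime_pow_of_not_dvd {p : ℕ} (hp : p.Prime) {a : ℤ} (ha : ¬ (p : ℤ) ∣ a)
    (α : ℕ) : IsCoprime a ((p ^ α : ℕ) : ℤ) := by
  push_cast
  exact ((Nat.prime_iff_prime_int.mp hp).coprime_iff_not_dvd.mpr ha).pow_left.symm

theorem card_mul_pow_six_eq_intCast_zmod_three_pow {α : ℕ} (hα : 2 ≤ α) {a c : ℤ}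
    (ha : ¬ 3 ∣ a) (hc : ¬ 3 ∣ c) :
    Nat.card {n : ZMod (3 ^ α) // (a : ZMod (3 ^ α)) * n ^ 6 = c} =
      if (a : ZMod 9) = c then 6 else 0 := by
  have h9 : 9 ∣ 3 ^ α := pow_dvd_pow 3 hα
  have : IsCyclic (ZMod (3 ^ α))ˣ :=
    ZMod.isCyclic_units_of_prime_pow 3 Nat.prime_three (by norm_num) α
  set A := ZMod.unitOfIsCoprime a (Int.isCoprime_prime_pow_of_not_dvd Nat.prime_three ha α)
  set C := ZMod.unitOfIsCoprime c (Int.isCoprime_prime_pow_of_not_dvd Nat.prime_three hc α)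
  have hcard9 : Nat.card (ZMod 9)ˣ = 6 := by
    rw [Nat.card_eq_fintype_card, ZMod.card_units_eq_totient]
    rfl
  have hsixth : (powMonoidHom 6 : (ZMod (3 ^ α))ˣ →* _).range = (ZMod.unitsMap h9).ker := by
    rw [← hcard9]
    exact IsCyclic.range_powMonoidHom_eq_ker _ (ZMod.unitsMap_surjective h9)
      (hcard9 ▸ ZMod.six_dvd_card_units_three_pow hα)
  have hmem : A⁻¹ * C ∈ (powMonoidHom 6 : (ZMod (3 ^ α))ˣ →* _).range ↔ (a : ZMod 9) = c := by
    rw [hsixth, MonoidHom.mem_ker, map_mul, map_inv, inv_mul_eq_one, Units.ext_iff,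
      ZMod.unitsMap_val, ZMod.unitsMap_val, ZMod.coe_unitOfIsCoprime, ZMod.coe_unitOfIsCoprime,
      ZMod.cast_intCast h9, ZMod.cast_intCast h9]
  rw [show (a : ZMod (3 ^ α)) = A from rfl, show (c : ZMod (3 ^ α)) = C from rfl,
    Units.card_mul_pow_eq_card_pow_eq A C (by norm_num),
    IsCyclic.card_pow_eq_of_dvd_card (ZMod.six_dvd_card_units_three_pow hα)]
  simp only [hmem]

theorem Int.emod_three_eq_one_iff (x : ℤ) : x % 3 = 1 ↔ (x : ZMod 3) = 1 := by
  simpa using (ZMod.intCast_eq_intCast_iff' x 1 3).symm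

theorem intCast_zmod_three_ne_zero {x : ℤ} (hx : ¬ 3 ∣ x) : (x : ZMod 3) ≠ 0 := by
  rwa [Ne, ZMod.intCast_zmod_eq_zero_iff_dvd]

theorem card_mul_pow_six_eq_pow_three_zmod_three {a m : ℤ} (ha : ¬ 3 ∣ a) (hm : ¬ 3 ∣ m) :
    Nat.card {n : ZMod 3 // (a : ZMod 3) * n ^ 6 = (m : ZMod 3) ^ 3} =
      if a * m % 3 = 1 then 2 else 0 := by
  have key : ∀ A M : ZMod 3, A ≠ 0 → M ≠ 0 →
      Fintype.card {n : ZMod 3 // A * n ^ 6 = M ^ 3} = if A * M = 1 then 2 else 0 := by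
    decide
  rw [Nat.card_eq_fintype_card, key _ _ (intCast_zmod_three_ne_zero ha)
    (intCast_zmod_three_ne_zero hm)]
  simp only [Int.emod_three_eq_one_iff, Int.cast_mul]

theorem intCast_zmod_nine_eq_pow_three_iff {a m : ℤ} (ha : ¬ 3 ∣ a) (hm : ¬ 3 ∣ m) :
    (a : ZMod 9) = (m : ZMod 9) ^ 3 ↔ a * m % 3 = 1 ∧ ∃ x : ℤ, a * x ^ 3 ≡ 1 [ZMOD 9] := by
  let π := ZMod.castHom (show 3 ∣ 9 by norm_num) (ZMod 3)
  have key : ∀ A M : ZMod 9, π A ≠ 0 → π M ≠ 0 →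
      (A = M ^ 3 ↔ π (A * M) = 1 ∧ ∃ X, A * X ^ 3 = 1) := by
    decide
  have hcube : (∃ x : ℤ, a * x ^ 3 ≡ 1 [ZMOD 9]) ↔ ∃ X : ZMod 9, (a : ZMod 9) * X ^ 3 = 1 := by
    have hmod (x : ℤ) : a * x ^ 3 ≡ 1 [ZMOD 9] ↔ (a : ZMod 9) * (x : ZMod 9) ^ 3 = 1 := by
      have := (ZMod.intCast_eq_intCast_iff (a * x ^ 3) 1 9).symm
      push_cast at this
      exact this
    simp only [hmod]
    exact (ZMod.intCast_surjective.exists (p := fun X => (a : ZMod 9) * X ^ 3 = 1)).symm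
  rw [key _ _ (by simpa [π] using intCast_zmod_three_ne_zero ha)
    (by simpa [π] using intCast_zmod_three_ne_zero hm), Int.emod_three_eq_one_iff, hcube,
    ← Int.cast_mul, map_intCast]

open Classical in
/-- For integers `a, m` coprime to `3`: the number of solutions `n mod 3` of
`a n^6 ≡ m^3 (mod 3)` is `2` if `a⁻¹ m` is a quadratic residue mod `3`
(equivalently `am ≡ 1 (mod 3)`) and `0` otherwise; for `α ≥ 2`, the number of
solutions mod `3^α` is `6` if `am ≡ 1 (mod 3)` and `a⁻¹` is a cubic residue
modulo `9` (equivalently `∃ x, a x³ ≡ 1 (mod 9)`), and `0` otherwise. -/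
theorem stmt_4 (a m : ℤ) (ha : ¬ (3 : ℤ) ∣ a) (hm : ¬ (3 : ℤ) ∣ m) :
    (rhoCount a m 3 = if a * m % 3 = 1 then 2 else 0) ∧
    ∀ α : ℕ, 2 ≤ α →
      rhoCount a m (3 ^ α) =
        if a * m % 3 = 1 ∧ ∃ x : ℤ, a * x ^ 3 ≡ 1 [ZMOD 9] then 6 else 0 := by
  refine ⟨card_mul_pow_six_eq_pow_three_zmod_three ha hm, fun α hα => ?_⟩
  have hm3 : ¬ 3 ∣ m ^ 3 := fun h => hm (Int.prime_three.dvd_of_dvd_pow h)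
  rw [rhoCount, ← Int.cast_pow, card_mul_pow_six_eq_intCast_zmod_three_pow hα ha hm3,
    Int.cast_pow]
  simp only [intCast_zmod_nine_eq_pow_three_iff ha hm]
end

section
/- Let p ≥ 5 be prime and a, m integers with p ∤ am. For every α ≥ 1, the number of solutions n mod p^α to a n^6 ≡ m^3 (mod p^α) equals the number of solutions mod p, and this number equals ½(1 + χ₃)(1 + χ₂)(2 + ε), where χ₃ is 1 if a^{-1} is a cube mod p and −1 otherwise, χ₂ is the Legendre symbol (a^{-1}m / p), and ε is the Legendre symbol (−3/p). In particular it lies in {0, 2, 6}. -/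
section FiniteField

variable {F : Type*} [Field F]

theorem natCard_pow_eq_pow_eq_natCard_pow_eq_one {d : F} (hd : d ≠ 0) (k : ℕ) :
    Nat.card {n : F // n ^ k = d ^ k} = Nat.card {u : F // u ^ k = 1} :=
  Nat.card_congr <| .symm <| (Equiv.mulRight₀ d hd).subtypeEquiv fun u => by
    simp [mul_pow, pow_ne_zero k hd]

theorem exists_pow_six_eq_iff (c : F) : (∃ n, n ^ 6 = c) ↔ IsSquare c ∧ ∃ t, t ^ 3 = c := by
  constructor
  · rintro ⟨n, rfl⟩
    exact ⟨⟨n ^ 3, by ring⟩, n ^ 2, by ring⟩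
  · rintro ⟨⟨s, rfl⟩, t, ht⟩
    rcases eq_or_ne t 0 with rfl | ht0
    · exact ⟨0, by simpa [eq_comm] using ht⟩
    -- `(s / t) ^ 6 = c ^ 3 / c ^ 2` with `c = s * s = t ^ 3`
    refine ⟨s / t, ?_⟩
    field_simp
    linear_combination (-(s ^ 2 * (t ^ 3 + s ^ 2))) * ht

-- Inverse to `(v, s) ↦ v * s`, as `u = u ^ 4 * u ^ 3` when `u ^ 6 = 1`.
def sixthRootsOfUnityEquiv :
    {u : F // u ^ 6 = 1} ≃ {v : F // v ^ 3 = 1} × {s : F // s ^ 2 = 1} where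
  toFun u :=
    (⟨u.1 ^ 4, by linear_combination (u.1 ^ 6 + 1) * u.2⟩, ⟨u.1 ^ 3, by linear_combination u.2⟩)
  invFun vs := ⟨vs.1.1 * vs.2.1, by
    linear_combination
      (vs.2.1 ^ 6 * (vs.1.1 ^ 3 + 1)) * vs.1.2 + (vs.2.1 ^ 4 + vs.2.1 ^ 2 + 1) * vs.2.2⟩
  left_inv u := by ext; simp only; linear_combination u.1 * u.2
  right_inv vs := by
    obtain ⟨⟨v, hv⟩, ⟨s, hs⟩⟩ := vs
    ext <;> simp only
    · linear_combination (s ^ 4 * v) * hv + (v * (s ^ 2 + 1)) * hs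
    · linear_combination (s ^ 3) * hv + s * hs

theorem exists_pow_eq_mul_pow_iff {b d : F} (hd : d ≠ 0) (k : ℕ) :
    (∃ t, t ^ k = b * d ^ k) ↔ ∃ t, t ^ k = b :=
  ⟨fun ⟨t, ht⟩ => ⟨t / d, by rw [div_pow, ht, mul_div_cancel_right₀ _ (pow_ne_zero k hd)]⟩,
    fun ⟨t, ht⟩ => ⟨t * d, by rw [mul_pow, ht]⟩⟩

variable [Fintype F] [DecidableEq F]

theorem natCard_sq_eq (hF : ringChar F ≠ 2) (a : F) :
    (Nat.card {x : F // x ^ 2 = a} : ℤ) = quadraticChar F a + 1 := by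
  rw [← quadraticChar_card_sqrts hF a, ← Nat.card_eq_card_toFinset]
  rfl

theorem natCard_cube_eq_one (hF : ringChar F ≠ 2) (h3 : (3 : F) ≠ 0) :
    (Nat.card {u : F // u ^ 3 = 1} : ℤ) = quadraticChar F (-3) + 2 := by
  have h2 : (2 : F) ≠ 0 := Ring.two_ne_zero hF
  -- `u ^ 3 - 1 = (u - 1) * (u ^ 2 + u + 1)` and `4 * (u ^ 2 + u + 1) = (2 * u + 1) ^ 2 + 3`
  have hroots : {u : F | u ^ 3 = 1} = insert 1 {u | u ^ 2 + u + 1 = 0} := by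
    ext u
    simp only [Set.mem_ofPred_eq, Set.mem_insert_iff]
    rw [← sub_eq_zero, show u ^ 3 - 1 = (u - 1) * (u ^ 2 + u + 1) by ring, mul_eq_zero, sub_eq_zero]
  have hquad : Nat.card {u : F // u ^ 2 + u + 1 = 0} = Nat.card {y : F // y ^ 2 = -3} :=
    Nat.card_congr <| ((Equiv.mulLeft₀ 2 h2).trans (Equiv.addRight 1)).subtypeEquiv fun u => by
      change u ^ 2 + u + 1 = 0 ↔ (2 * u + 1) ^ 2 = -3
      constructor
      · intro h
        linear_combination 4 * h
      · intro h
        have h4 : (4 : F) ≠ 0 := by simpa [show (4 : F) = 2 * 2 by norm_num] using h2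
        have h4u : (4 : F) * (u ^ 2 + u + 1) = 0 := by linear_combination h
        exact (mul_eq_zero.mp h4u).resolve_left h4
  have h1 : (1 : F) ∉ {u : F | u ^ 2 + u + 1 = 0} := by
    simpa [show (1 : F) + 1 + 1 = 3 by norm_num] using h3
  have hcard : Nat.card {u : F // u ^ 3 = 1} = Nat.card {u : F // u ^ 2 + u + 1 = 0} + 1 := by
    change Nat.card {u : F | u ^ 3 = 1} = Nat.card {u : F | u ^ 2 + u + 1 = 0} + 1
    rw [Nat.card_coe_set_eq, hroots, Set.ncard_insert_of_notMem h1 (Set.toFinite _)]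
    rfl
  rw [hcard, hquad]
  push_cast
  rw [natCard_sq_eq hF]
  ring

theorem natCard_pow_six_eq (hF : ringChar F ≠ 2) (h3 : (3 : F) ≠ 0) {c : F} (hc : c ≠ 0) :
    (Nat.card {n : F // n ^ 6 = c} : ℤ) =
      if IsSquare c ∧ ∃ t, t ^ 3 = c then 2 * (quadraticChar F (-3) + 2) else 0 := by
  split_ifs with h
  · obtain ⟨d, rfl⟩ := (exists_pow_six_eq_iff c).mpr h
    rw [natCard_pow_eq_pow_eq_natCard_pow_eq_one (by rintro rfl; simp at hc),
      Nat.card_congr sixthRootsOfUnityEquiv, Nat.card_prod]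
    push_cast
    rw [natCard_cube_eq_one hF h3, natCard_sq_eq hF, MulChar.map_one]
    ring
  · have : IsEmpty {n : F // n ^ 6 = c} := ⟨fun n => h ((exists_pow_six_eq_iff c).mp ⟨n, n.2⟩)⟩
    simp

theorem two_mul_natCard_pow_six_eq (hF : ringChar F ≠ 2) (h3 : (3 : F) ≠ 0) {c : F} (hc : c ≠ 0) :
    2 * (Nat.card {n : F // n ^ 6 = c} : ℤ) =
      (1 + if ∃ t, t ^ 3 = c then 1 else -1) * (1 + quadraticChar F c) *
        (2 + quadraticChar F (-3)) := by
  rw [natCard_pow_six_eq hF h3 hc]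
  rcases quadraticChar_dichotomy hc with hsq | hsq <;> rw [hsq]
  · simp only [(quadraticChar_one_iff_isSquare hc).mp hsq, true_and]
    split_ifs <;> ring
  · simp only [quadraticChar_neg_one_iff_not_isSquare.mp hsq, false_and, if_false]
    ring

theorem natCard_pow_six_mem (hF : ringChar F ≠ 2) (h3 : (3 : F) ≠ 0) {c : F} (hc : c ≠ 0) :
    Nat.card {n : F // n ^ 6 = c} ∈ ({0, 2, 6} : Set ℕ) := by
  have hcard := natCard_pow_six_eq hF h3 hc
  have h3' : (-3 : F) ≠ 0 := neg_ne_zero.mpr h3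
  simp only [Set.mem_insert_iff, Set.mem_singleton_iff]
  rcases quadraticChar_dichotomy h3' with hε | hε <;> rw [hε] at hcard <;> split_ifs at hcard <;>
    omega

end FiniteField

open Polynomial in
theorem natCard_eval_eq_zero_eq_of_isNilpotent_ker {R S : Type*} [CommRing R] [CommRing S]
    [IsReduced S] {φ : R →+* S} (hφ : Function.Surjective φ)
    (hker : ∀ x, φ x = 0 → IsNilpotent x) {P : R[X]}
    (hP : ∀ x, φ (P.eval x) = 0 → IsUnit (φ (P.derivative.eval x))) :
    Nat.card {x : R // P.eval x = 0} = Nat.card {y : S // (P.map φ).eval y = 0} := by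
  have isUnit_of_map : ∀ x, IsUnit (φ x) → IsUnit x := by
    rintro x ⟨u, hu⟩
    obtain ⟨y, hy⟩ := hφ ↑u⁻¹
    have hxy : IsNilpotent (x * y - 1) := hker _ (by simp [hy, ← hu])
    exact isUnit_of_mul_isUnit_left (x := x) (y := y) (by simpa using hxy.isUnit_one_add)
  have newton : ∀ x, φ (P.eval x) = 0 → ∃! r, IsNilpotent (x - r) ∧ aeval r P = 0 := fun x hx =>
    existsUnique_nilpotent_sub_and_aeval_eq_zero (by simpa using hker _ hx)
      (by simpa using isUnit_of_map _ (hP x hx))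
  refine Nat.card_eq_of_bijective (fun x => ⟨φ x, by rw [eval_map_apply, x.2, map_zero]⟩) ⟨?_, ?_⟩
  · rintro ⟨x₁, hx₁⟩ ⟨x₂, hx₂⟩ h
    have h₁₂ : IsNilpotent (x₁ - x₂) := hker _ (by simpa [sub_eq_zero] using h)
    exact Subtype.ext <| (newton x₁ (by rw [hx₁, map_zero])).unique
      ⟨by simp, by simpa using hx₁⟩ ⟨h₁₂, by simpa using hx₂⟩
  · rintro ⟨y, hy⟩
    obtain ⟨x, rfl⟩ := hφ y
    obtain ⟨r, ⟨hxr, hr⟩, -⟩ := newton x (by rwa [← eval_map_apply])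
    refine ⟨⟨r, by simpa using hr⟩, Subtype.ext ?_⟩
    change φ r = φ x
    rw [eq_comm, ← sub_eq_zero, ← map_sub, (hxr.map φ).eq_zero]

theorem ZMod.exists_intCast_pow_modEq_iff (n k : ℕ) (b : ℤ) :
    (∃ x : ℤ, x ^ k ≡ b [ZMOD n]) ↔ ∃ t : ZMod n, t ^ k = b := by
  simp_rw [← ZMod.intCast_eq_intCast_iff, Int.cast_pow]
  exact (ZMod.intCast_surjective.exists (p := fun t : ZMod n => t ^ k = b)).symm

theorem ZMod.isNilpotent_of_castHom_eq_zero {p α : ℕ} (hα : α ≠ 0) {x : ZMod (p ^ α)}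
    (hx : ZMod.castHom (dvd_pow_self p hα) (ZMod p) x = 0) : IsNilpotent x := by
  obtain ⟨z, rfl⟩ := ZMod.intCast_surjective x
  obtain ⟨w, rfl⟩ := (ZMod.intCast_zmod_eq_zero_iff_dvd z p).mp (by simpa using hx)
  exact ⟨α, by push_cast; rw [mul_pow, ← Nat.cast_pow, ZMod.natCast_self, zero_mul]⟩

open Polynomial in
theorem rhoCount_eq_natCard_eval (a m : ℤ) (M : ℕ) :
    rhoCount a m M =
      Nat.card {n : ZMod M // (C (a : ZMod M) * X ^ 6 - C ((m : ZMod M) ^ 3)).eval n = 0} :=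
  Nat.card_congr <| Equiv.subtypeEquivRight fun n => by simp [sub_eq_zero]

open Polynomial in
theorem rhoCount_prime_pow_eq {p : ℕ} [Fact p.Prime] {a m : ℤ} (ha : (a : ZMod p) ≠ 0)
    (hm : (m : ZMod p) ≠ 0) (h6 : (6 : ZMod p) ≠ 0) {α : ℕ} (hα : α ≠ 0) :
    rhoCount a m (p ^ α) = rhoCount a m p := by
  let φ := ZMod.castHom (dvd_pow_self p hα) (ZMod p)
  rw [rhoCount_eq_natCard_eval, rhoCount_eq_natCard_eval,
    natCard_eval_eq_zero_eq_of_isNilpotent_ker (φ := φ) (ZMod.castHom_surjective _)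
      (fun _ => ZMod.isNilpotent_of_castHom_eq_zero hα)]
  · simp [Polynomial.map_sub, Polynomial.map_mul, φ]
  · intro x hx
    rw [eval_sub, eval_mul, eval_C, eval_pow, eval_X, eval_C] at hx
    simp only [map_sub, map_mul, map_pow, map_intCast, sub_eq_zero] at hx
    have hx0 : φ x ≠ 0 := fun h => hm (by simpa [h] using hx.symm)
    rw [derivative_sub, derivative_C_mul_X_pow, derivative_C, sub_zero, eval_mul, eval_C, eval_pow,
      eval_X]
    simp only [map_mul, map_pow, map_intCast, map_natCast, isUnit_iff_ne_zero]
    exact mul_ne_zero (mul_ne_zero ha h6) (pow_ne_zero _ hx0)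

theorem rhoCount_prime_eq {p : ℕ} [Fact p.Prime] {a : ℤ} (m : ℤ) (ha : (a : ZMod p) ≠ 0) :
    rhoCount a m p = Nat.card {n : ZMod p // n ^ 6 = (a : ZMod p)⁻¹ * (m : ZMod p) ^ 3} :=
  Nat.card_congr <| Equiv.subtypeEquivRight fun _ => (eq_inv_mul_iff_mul_eq₀ ha).symm

open Classical in
/-- Let `p ≥ 5` be prime and `a, m` integers with `p ∤ am`.  For every `α ≥ 1`
the number of solutions of `a n^6 ≡ m^3 (mod p^α)` equals the number of
solutions mod `p`, and twice this number equals `(1 + χ₃)(1 + χ₂)(2 + ε)`,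
where `χ₃ = 1` if `a⁻¹` is a cube mod `p` and `−1` otherwise, `χ₂` is the
Legendre symbol `(a⁻¹ m / p)`, and `ε = (−3/p)`.  In particular the count
lies in `{0, 2, 6}`. -/
theorem stmt_5 (p : ℕ) [hp : Fact p.Prime] (hp5 : 5 ≤ p) (a m : ℤ)
    (ha : ¬ (p : ℤ) ∣ a) (hm : ¬ (p : ℤ) ∣ m)
    (ainv : ℤ) (hainv : a * ainv ≡ 1 [ZMOD p])
    (χ₃ χ₂ ε : ℤ)
    (hχ₃ : χ₃ = if ∃ x : ℤ, x ^ 3 ≡ ainv [ZMOD p] then 1 else -1)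
    (hχ₂ : χ₂ = legendreSym p (ainv * m))
    (hε : ε = legendreSym p (-3)) :
    ∀ α : ℕ, 1 ≤ α →
      rhoCount a m (p ^ α) = rhoCount a m p ∧
      2 * (rhoCount a m (p ^ α) : ℤ) = (1 + χ₃) * (1 + χ₂) * (2 + ε) ∧
      rhoCount a m (p ^ α) ∈ ({0, 2, 6} : Set ℕ) := by
  intro α hα
  have hchar : ringChar (ZMod p) ≠ 2 := by rw [ZMod.ringChar_zmod_n]; omega
  have h3 : (3 : ZMod p) ≠ 0 := fun h =>
    absurd (Nat.le_of_dvd three_pos ((ZMod.natCast_eq_zero_iff 3 p).mp (by exact_mod_cast h)))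
      (by omega)
  have h6 : (6 : ZMod p) ≠ 0 := by
    simpa [show (6 : ZMod p) = 2 * 3 by norm_num] using mul_ne_zero (Ring.two_ne_zero hchar) h3
  have hA : (a : ZMod p) ≠ 0 := by rwa [Ne, ZMod.intCast_zmod_eq_zero_iff_dvd]
  have hM : (m : ZMod p) ≠ 0 := by rwa [Ne, ZMod.intCast_zmod_eq_zero_iff_dvd]
  have hainv' : (ainv : ZMod p) = (a : ZMod p)⁻¹ := eq_inv_of_mul_eq_one_right <| by
    exact_mod_cast (ZMod.intCast_eq_intCast_iff _ _ p).mpr hainv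
  set c := (a : ZMod p)⁻¹ * (m : ZMod p) ^ 3
  have hc : c ≠ 0 := mul_ne_zero (inv_ne_zero hA) (pow_ne_zero 3 hM)
  -- `c = (a⁻¹ m) m²` has the quadratic character of `a⁻¹ m` and the cubic character of `a⁻¹`
  have hχ₂' : χ₂ = quadraticChar (ZMod p) c := by
    rw [hχ₂, legendreSym, Int.cast_mul, hainv', show c = (a : ZMod p)⁻¹ * m * m ^ 2 by ring,
      map_mul (quadraticChar (ZMod p)) _ (_ ^ 2), quadraticChar_sq_one' hM, mul_one]
  have hχ₃' : χ₃ = if ∃ t, t ^ 3 = c then 1 else -1 := by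
    simp only [hχ₃, ZMod.exists_intCast_pow_modEq_iff, c, exists_pow_eq_mul_pow_iff hM, hainv']
  have hε' : ε = quadraticChar (ZMod p) (-3) := by rw [hε, legendreSym]; push_cast; rfl
  rw [rhoCount_prime_pow_eq hA hM h6 (by omega), rhoCount_prime_eq m hA, hχ₂', hχ₃', hε']
  exact ⟨rfl, two_mul_natCard_pow_six_eq hchar h3 hc, natCard_pow_six_mem hchar h3 hc⟩
end

section
/- For any nonzero integers a, m with gcd(t, 6am) = 1 and t a positive integer, ρ_m^{(a)}(t²) ≤ 6^{ω(t)}, where ω(t) is the number of distinct prime factors of t. Consequently, for every ε > 0, ρ_m^{(a)}(t²) = O_ε(t^ε). -/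
open Finset

theorem card_rootsOfUnity_le_of_isCyclic {R : Type*} [CommMonoid R] [Finite Rˣ] [IsCyclic Rˣ]
    {k : ℕ} (hk : k ≠ 0) : Nat.card (rootsOfUnity k R) ≤ k := by
  classical
  have := Fintype.ofFinite Rˣ
  calc Nat.card (rootsOfUnity k R) = #{u : Rˣ | u ^ k = 1} := by
        rw [← Fintype.card_subtype, ← Nat.card_eq_fintype_card]; rfl
    _ ≤ k := IsCyclic.card_pow_eq_one_le (Nat.pos_of_ne_zero hk)

theorem card_rootsOfUnity_prod (k : ℕ) (R S : Type*) [CommMonoid R] [CommMonoid S] :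
    Nat.card (rootsOfUnity k (R × S)) =
      Nat.card (rootsOfUnity k R) * Nat.card (rootsOfUnity k S) := by
  rw [← Nat.card_prod]
  refine Nat.card_congr ((MulEquiv.prodUnits.toEquiv.subtypeEquiv fun u => ?_).trans
    (Equiv.subtypeProdEquivProd (p := (· ∈ rootsOfUnity k R)) (q := (· ∈ rootsOfUnity k S))))
  simp only [mem_rootsOfUnity]
  rw [← MulEquiv.map_eq_one_iff MulEquiv.prodUnits, map_pow, Prod.ext_iff]
  rfl

theorem ZMod.card_rootsOfUnity_mul (k : ℕ) {M N : ℕ} (h : M.Coprime N) :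
    Nat.card (rootsOfUnity k (ZMod (M * N))) =
      Nat.card (rootsOfUnity k (ZMod M)) * Nat.card (rootsOfUnity k (ZMod N)) := by
  rw [← card_rootsOfUnity_prod,
    Nat.card_congr ((ZMod.chineseRemainder h).toMulEquiv.restrictRootsOfUnity k).toEquiv]

theorem ZMod.card_rootsOfUnity_le_pow_card_primeFactors {k M : ℕ} (hk : k ≠ 0) (hM : Odd M) :
    Nat.card (rootsOfUnity k (ZMod M)) ≤ k ^ M.primeFactors.card := by
  induction M using Nat.recOnPosPrimePosCoprime with
  | zero => simp at hM
  | one =>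
    rw [Nat.primeFactors_one, card_empty, pow_zero]
    exact Finite.card_le_one_iff_subsingleton.mpr inferInstance
  | prime_pow p n hp hn =>
    have hp2 : p ≠ 2 := by rintro rfl; simp [Nat.odd_pow_iff hn.ne', Nat.odd_iff] at hM
    have := ZMod.isCyclic_units_of_prime_pow p hp hp2 n
    rw [Nat.primeFactors_prime_pow hn.ne' hp, card_singleton, pow_one]
    exact card_rootsOfUnity_le_of_isCyclic hk
  | coprime M N hM1 hN1 hMN ihM ihN =>
    rw [ZMod.card_rootsOfUnity_mul k hMN, Nat.primeFactors_mul (by omega) (by omega),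
      card_union_of_disjoint hMN.disjoint_primeFactors, pow_add]
    exact Nat.mul_le_mul (ihM (Nat.Odd.of_mul_left hM)) (ihN (Nat.Odd.of_mul_right hM))

theorem card_mul_pow_eq_le_card_rootsOfUnity {R : Type*} [CommMonoid R] [Finite Rˣ] {k : ℕ}
    (hk : k ≠ 0) (a : R) {b : R} (hb : IsUnit b) :
    Nat.card {x : R // a * x ^ k = b} ≤ Nat.card (rootsOfUnity k R) := by
  rcases isEmpty_or_nonempty {x : R // a * x ^ k = b} with h | ⟨x₀, hx₀⟩
  · simp
  have hunit {x : R} (hx : a * x ^ k = b) : IsUnit x :=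
    (isUnit_pow_iff hk).mp (isUnit_of_mul_isUnit_right (hx ▸ hb))
  have ha : IsUnit a := isUnit_of_mul_isUnit_left (hx₀ ▸ hb)
  let f (x : {x : R // a * x ^ k = b}) : rootsOfUnity k R :=
    ⟨(hunit x.2).unit * (hunit hx₀).unit⁻¹, by
      rw [mem_rootsOfUnity, mul_pow, inv_pow, mul_inv_eq_one, Units.ext_iff]
      simpa using ha.mul_left_cancel (x.2.trans hx₀.symm)⟩
  refine Nat.card_le_card_of_injective f fun x y hxy => Subtype.ext ?_
  simpa using congrArg Units.val (mul_right_cancel (congrArg Subtype.val hxy))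

theorem exists_pow_card_primeFactors_le_mul_rpow {k ε : ℝ} (hk : 1 ≤ k) (hε : 0 < ε) :
    ∃ C : ℝ, 0 < C ∧ ∀ n : ℕ, n ≠ 0 → k ^ n.primeFactors.card ≤ C * (n : ℝ) ^ ε := by
  classical
  set B := ⌈k ^ ε⁻¹⌉₊
  refine ⟨k ^ B, by positivity, fun n hn => ?_⟩
  have hle : ∀ p ∈ n.primeFactors, k ≤ (if p < B then k else 1) * (p : ℝ) ^ ε := by
    intro p hp
    split_ifs with hpB
    · exact le_mul_of_one_le_right (by linarith)
        (Real.one_le_rpow (by exact_mod_cast (Nat.prime_of_mem_primeFactors hp).one_le) hε.le)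
    · calc k = (k ^ ε⁻¹) ^ ε := by
            rw [← Real.rpow_mul (by linarith), inv_mul_cancel₀ hε.ne', Real.rpow_one]
        _ ≤ (p : ℝ) ^ ε := by
          gcongr
          exact (Nat.le_ceil _).trans (by exact_mod_cast not_lt.mp hpB)
        _ = 1 * (p : ℝ) ^ ε := (one_mul _).symm
  calc k ^ n.primeFactors.card = ∏ p ∈ n.primeFactors, k := (prod_const k).symm
    _ ≤ ∏ p ∈ n.primeFactors, (if p < B then k else 1) * (p : ℝ) ^ ε :=
        prod_le_prod (fun _ _ => by positivity) hle
    _ = k ^ #{p ∈ n.primeFactors | p < B} * ((∏ p ∈ n.primeFactors, p : ℕ) : ℝ) ^ ε := by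
        rw [prod_mul_distrib, prod_ite, prod_const, prod_const_one, mul_one, Nat.cast_prod,
          Real.finsetProd_rpow _ _ fun p _ => Nat.cast_nonneg p]
    _ ≤ k ^ B * (n : ℝ) ^ ε := by
        gcongr
        · exact (card_le_card fun p hp => mem_range.mpr (mem_filter.mp hp).2).trans
            (card_range B).le
        · exact Nat.le_of_dvd (Nat.pos_of_ne_zero hn) (Nat.prod_primeFactors_dvd n)

theorem rhoCount_le_six_pow_card_primeFactors {a m : ℤ} {M : ℕ} (hM : Odd M)
    (hm : IsCoprime (M : ℤ) m) : rhoCount a m M ≤ 6 ^ M.primeFactors.card := by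
  have : NeZero M := ⟨hM.pos.ne'⟩
  calc rhoCount a m M ≤ Nat.card (rootsOfUnity 6 (ZMod M)) :=
        card_mul_pow_eq_le_card_rootsOfUnity (by norm_num) _
          (((ZMod.coe_int_isUnit_iff_isCoprime m M).mpr hm).pow 3)
    _ ≤ 6 ^ M.primeFactors.card :=
        ZMod.card_rootsOfUnity_le_pow_card_primeFactors (by norm_num) hM

/-- For nonzero integers `a, m` and a positive integer `t` with
`gcd(t, 6am) = 1`, one has `ρ_m^{(a)}(t²) ≤ 6^{ω(t)}`, where `ω(t)` is the
number of distinct prime factors of `t`; consequently, for every `ε > 0`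
there is a constant `C = C(ε) > 0` with `ρ_m^{(a)}(t²) ≤ C · t^ε`. -/
theorem stmt_10 :
    (∀ (a m : ℤ), a ≠ 0 → m ≠ 0 → ∀ t : ℕ, 0 < t →
      Int.gcd (t : ℤ) (6 * a * m) = 1 →
      rhoCount a m (t ^ 2) ≤ 6 ^ t.primeFactors.card) ∧
    (∀ ε : ℝ, 0 < ε → ∃ C : ℝ, 0 < C ∧
      ∀ (a m : ℤ), a ≠ 0 → m ≠ 0 → ∀ t : ℕ, 0 < t →
        Int.gcd (t : ℤ) (6 * a * m) = 1 →
        (rhoCount a m (t ^ 2) : ℝ) ≤ C * (t : ℝ) ^ ε) := by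
  have hbound (a m : ℤ) (t : ℕ) (hg : Int.gcd (t : ℤ) (6 * a * m) = 1) :
      rhoCount a m (t ^ 2) ≤ 6 ^ t.primeFactors.card := by
    have hcop : IsCoprime (t : ℤ) (6 * a * m) := Int.isCoprime_iff_gcd_eq_one.mpr hg
    have ht : ¬ 2 ∣ t := fun h2 => by
      simpa [Int.isUnit_iff] using
        hcop.isUnit_of_dvd' (Int.natCast_dvd_natCast.mpr h2) ⟨3 * a * m, by ring⟩
    rw [← Nat.primeFactors_pow t two_ne_zero]
    exact rhoCount_le_six_pow_card_primeFactors
      ((Nat.odd_pow_iff two_ne_zero).mpr (Nat.odd_iff.mpr (by omega)))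
      (by push_cast; exact hcop.of_mul_right_right.pow_left)
  refine ⟨fun a m _ _ t _ hg => hbound a m t hg, fun ε hε => ?_⟩
  obtain ⟨C, hC, hle⟩ := exists_pow_card_primeFactors_le_mul_rpow (k := 6) (by norm_num) hε
  refine ⟨C, hC, fun a m _ _ t ht hg => ?_⟩
  calc (rhoCount a m (t ^ 2) : ℝ) ≤ 6 ^ t.primeFactors.card := by
        exact_mod_cast hbound a m t hg
    _ ≤ C * (t : ℝ) ^ ε := hle t ht.ne'
end
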